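/- If c(1-b) = (2^c - 1)(1-ac) and a > (π/(2c²))(2^{-c} - 1) + 1/c, then z = 0 is a critical point of the standardized McN density with s'(0) < 0, i.e., z = 0 is a local maximum (mode) of the density. -/

import Mathlib

/-!
Since `Φ(0) = 1/2` and `φ(0)² = 1/(2π)`, both `s(0)` and `s'(0)` are explicit: the first
hypothesis makes `s(0) = 0`, and after substituting it, `s'(0) = -c(ac - 1)/π - (1 - 2^{-c})/2`,
which the second hypothesis makes negative. The density is `c/B(a,b)` times
`φ Φ^{ac-1} (1 - Φ^c)^{b-1}`, whose derivative is `s` times the positive factor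
`φ Φ^{ac-2} (1 - Φ^c)^{b-2}`; so near `0` the derivative changes sign from `+` to `-`, and the
first derivative test gives the local maximum.
-/

open Real MeasureTheory

noncomputable def betaFn (a b : ℝ) : ℝ := ∫ t in (0:ℝ)..1, t ^ (a-1) * (1-t) ^ (b-1)

noncomputable def gaussPdf (x : ℝ) : ℝ := (Real.sqrt (2 * Real.pi))⁻¹ * Real.exp (-x^2/2)

noncomputable def stdNormCdf (x : ℝ) : ℝ := ∫ t in Set.Iic x, gaussPdf t

noncomputable def sFun (a b c z : ℝ) : ℝ :=
  (a*c - 1) * gaussPdf z * (1 - stdNormCdf z ^ c)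
    - c * (b - 1) * gaussPdf z * stdNormCdf z ^ c
    - z * stdNormCdf z * (1 - stdNormCdf z ^ c)

open Filter Topology Set

lemma setIntegral_Iic_zero_of_even {f : ℝ → ℝ} (hf : Integrable f) (heven : ∀ x, f (-x) = f x) :
    ∫ x in Iic 0, f x = (∫ x, f x) / 2 := by
  have hsymm : ∫ x in Ioi 0, f x = ∫ x in Iic 0, f x := by
    rw [← neg_zero, ← integral_comp_neg_Iic]
    simp only [heven, neg_zero]
  rw [← intervalIntegral.integral_Iic_add_Ioi (b := 0) hf.integrableOn hf.integrableOn, hsymm]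
  ring

lemma hasDerivAt_setIntegral_Iic {f : ℝ → ℝ} (hf : Integrable f) {x : ℝ} (hx : ContinuousAt f x) :
    HasDerivAt (fun y => ∫ t in Iic y, f t) (f x) x := by
  have hFTC : HasDerivAt (fun y => (∫ t in Iic 0, f t) + ∫ t in (0:ℝ)..y, f t) (f x) x :=
    (intervalIntegral.integral_hasDerivAt_right hf.intervalIntegrable
      hf.aestronglyMeasurable.stronglyMeasurableAtFilter hx).const_add _
  refine hFTC.congr_of_eventuallyEq (Eventually.of_forall fun y => ?_)
  dsimp only
  rw [← intervalIntegral.integral_Iic_sub_Iic hf.integrableOn hf.integrableOn]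
  ring

lemma isLocalMax_of_hasDerivAt_mul {f k g : ℝ → ℝ} {x₀ : ℝ}
    (hf : ∀ᶠ x in 𝓝 x₀, HasDerivAt f (k x * g x) x) (hk : ∀ᶠ x in 𝓝 x₀, 0 < k x)
    (hg₀ : g x₀ = 0) (hg' : deriv g x₀ < 0) : IsLocalMax f x₀ := by
  refine isLocalMax_of_sign_deriv hf.self_of_nhds.continuousAt (nhdsWithin_le_nhds ?_)
  filter_upwards [hf, hk, eventually_nhdsWithin_sign_eq_of_deriv_neg hg' hg₀] with x hfx hkx hgx
  rw [hfx.deriv, sign_mul, sign_pos hkx, one_mul, hgx]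

lemma gaussPdf_eq_gaussianPDFReal : gaussPdf = ProbabilityTheory.gaussianPDFReal 0 1 := by
  ext x
  simp [gaussPdf, ProbabilityTheory.gaussianPDFReal]

lemma gaussPdf_pos (x : ℝ) : 0 < gaussPdf x := by
  unfold gaussPdf
  positivity

lemma gaussPdf_neg (x : ℝ) : gaussPdf (-x) = gaussPdf x := by
  simp [gaussPdf]

lemma integrable_gaussPdf : Integrable gaussPdf :=
  gaussPdf_eq_gaussianPDFReal ▸ ProbabilityTheory.integrable_gaussianPDFReal 0 1

lemma integral_gaussPdf : ∫ x, gaussPdf x = 1 := by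
  rw [gaussPdf_eq_gaussianPDFReal]
  exact ProbabilityTheory.integral_gaussianPDFReal_eq_one 0 one_ne_zero

lemma continuous_gaussPdf : Continuous gaussPdf := by
  unfold gaussPdf
  fun_prop

lemma hasDerivAt_gaussPdf (x : ℝ) : HasDerivAt gaussPdf (-x * gaussPdf x) x := by
  have hexp : HasDerivAt (fun y : ℝ => -y ^ 2 / 2) (-x) x :=
    ((hasDerivAt_pow 2 x).neg.div_const 2).congr_deriv (by ring)
  exact (hexp.exp.const_mul _).congr_deriv (by simp only [gaussPdf]; ring)

lemma gaussPdf_zero_sq : gaussPdf 0 ^ 2 = π⁻¹ / 2 := by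
  rw [gaussPdf]
  norm_num [mul_pow, inv_pow, sq_sqrt pi_pos.le]
  ring

lemma stdNormCdf_zero : stdNormCdf 0 = 1 / 2 := by
  rw [stdNormCdf, setIntegral_Iic_zero_of_even integrable_gaussPdf gaussPdf_neg, integral_gaussPdf]

lemma stdNormCdf_zero_rpow (c : ℝ) : stdNormCdf 0 ^ c = 2 ^ (-c) := by
  rw [stdNormCdf_zero, one_div, inv_rpow zero_le_two, ← rpow_neg zero_le_two]

lemma hasDerivAt_stdNormCdf (x : ℝ) : HasDerivAt stdNormCdf (gaussPdf x) x :=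
  hasDerivAt_setIntegral_Iic integrable_gaussPdf continuous_gaussPdf.continuousAt

lemma continuous_stdNormCdf : Continuous stdNormCdf :=
  continuous_iff_continuousAt.2 fun x => (hasDerivAt_stdNormCdf x).continuousAt

lemma hasDerivAt_sFun (a b c : ℝ) {z : ℝ} (hz : stdNormCdf z ≠ 0) :
    HasDerivAt (sFun a b c)
      (-(a*c - 1) * z * gaussPdf z * (1 - stdNormCdf z ^ c)
        - c * (a*c - 1 + c * (b - 1)) * gaussPdf z ^ 2 * stdNormCdf z ^ (c - 1)
        + c * (b - 1) * z * gaussPdf z * stdNormCdf z ^ c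
        - (stdNormCdf z + z * gaussPdf z) * (1 - stdNormCdf z ^ c)
        + c * z * gaussPdf z * stdNormCdf z ^ c) z := by
  have hΦc := (hasDerivAt_stdNormCdf z).rpow_const (p := c) (Or.inl hz)
  have hΦ1 : stdNormCdf z ^ (c - 1) * stdNormCdf z = stdNormCdf z ^ c := by
    rw [← rpow_add_one hz]; ring_nf
  refine ((((hasDerivAt_gaussPdf z).const_mul (a*c - 1)).mul ((hasDerivAt_const z 1).sub hΦc)).sub
    (((hasDerivAt_gaussPdf z).const_mul (c * (b - 1))).mul hΦc) |>.sub
    (((hasDerivAt_id z).mul (hasDerivAt_stdNormCdf z)).mul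
      ((hasDerivAt_const z 1).sub hΦc))).congr_deriv ?_
  simp only [id, Pi.sub_apply, Pi.mul_apply]
  linear_combination (c * z * gaussPdf z) * hΦ1

lemma sFun_zero (a b c : ℝ) :
    sFun a b c 0 = ((a*c - 1) * (1 - 2 ^ (-c)) - c * (b - 1) * 2 ^ (-c)) * gaussPdf 0 := by
  rw [sFun, stdNormCdf_zero_rpow]
  ring

lemma hasDerivAt_sFun_zero (a b c : ℝ) :
    HasDerivAt (sFun a b c)
      (-(c * (a*c - 1 + c * (b - 1)) * 2 ^ (-c) / π) - (1 - 2 ^ (-c)) / 2) 0 := by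
  have hpow : stdNormCdf 0 ^ (c - 1) = 2 * 2 ^ (-c) := by
    rw [stdNormCdf_zero_rpow, neg_sub, sub_eq_add_neg, rpow_add two_pos, rpow_one]
  refine (hasDerivAt_sFun a b c (z := 0) (by rw [stdNormCdf_zero]; norm_num)).congr_deriv ?_
  rw [stdNormCdf_zero_rpow, gaussPdf_zero_sq, hpow, stdNormCdf_zero]
  ring

noncomputable def mcNKernel (a b c z : ℝ) : ℝ :=
  gaussPdf z * stdNormCdf z ^ (a*c - 1) * (1 - stdNormCdf z ^ c) ^ (b - 1)

lemma hasDerivAt_mcNKernel (a b c : ℝ) {z : ℝ} (hΦ : 0 < stdNormCdf z)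
    (hΦc : stdNormCdf z ^ c < 1) :
    HasDerivAt (mcNKernel a b c)
      (gaussPdf z * stdNormCdf z ^ (a*c - 2) * (1 - stdNormCdf z ^ c) ^ (b - 2) * sFun a b c z)
      z := by
  have h1Φc : 0 < 1 - stdNormCdf z ^ c := sub_pos.2 hΦc
  have hΦ' := hasDerivAt_stdNormCdf z
  have hpow := hΦ'.rpow_const (p := c) (Or.inl hΦ.ne')
  refine (((hasDerivAt_gaussPdf z).mul (hΦ'.rpow_const (p := a*c - 1) (Or.inl hΦ.ne'))).mul
    (((hasDerivAt_const z 1).sub hpow).rpow_const (p := b - 1) (Or.inl h1Φc.ne'))).congr_deriv ?_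
  have e1 : stdNormCdf z ^ (a*c - 1 - 1) = stdNormCdf z ^ (a*c - 2) := by ring_nf
  have e2 : stdNormCdf z ^ (a*c - 1) = stdNormCdf z ^ (a*c - 2) * stdNormCdf z := by
    rw [← rpow_add_one hΦ.ne']; ring_nf
  have e3 : (1 - stdNormCdf z ^ c) ^ (b - 1 - 1) = (1 - stdNormCdf z ^ c) ^ (b - 2) := by ring_nf
  have e4 : (1 - stdNormCdf z ^ c) ^ (b - 1)
      = (1 - stdNormCdf z ^ c) ^ (b - 2) * (1 - stdNormCdf z ^ c) := by
    rw [← rpow_add_one h1Φc.ne']; ring_nf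
  have e5 : stdNormCdf z ^ (c - 1) * stdNormCdf z = stdNormCdf z ^ c := by
    rw [← rpow_add_one hΦ.ne']; ring_nf
  simp only [Pi.sub_apply, Pi.mul_apply]
  rw [e1, e2, e3, e4, sFun]
  linear_combination (-c * (b - 1) * gaussPdf z ^ 2 * stdNormCdf z ^ (a*c - 2)
    * (1 - stdNormCdf z ^ c) ^ (b - 2)) * e5

lemma isLocalMax_mcNKernel {a b c : ℝ} (hc : 0 < c) (hs₀ : sFun a b c 0 = 0)
    (hs' : deriv (sFun a b c) 0 < 0) : IsLocalMax (mcNKernel a b c) 0 := by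
  have hΦ : ∀ᶠ z in 𝓝 0, stdNormCdf z ∈ Ioo 0 1 :=
    continuous_stdNormCdf.continuousAt.eventually_mem
      (by rw [stdNormCdf_zero]; exact Ioo_mem_nhds (by norm_num) (by norm_num))
  have hΦc : ∀ᶠ z in 𝓝 0, stdNormCdf z ^ c < 1 :=
    hΦ.mono fun z hz => rpow_lt_one hz.1.le hz.2 hc
  refine isLocalMax_of_hasDerivAt_mul ((hΦ.and hΦc).mono fun z hz =>
    hasDerivAt_mcNKernel a b c hz.1.1 hz.2) ((hΦ.and hΦc).mono fun z hz => ?_) hs₀ hs'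
  exact mul_pos (mul_pos (gaussPdf_pos z) (rpow_pos_of_pos hz.1.1 _))
    (rpow_pos_of_pos (sub_pos.2 hz.2) _)

lemma betaFn_nonneg (a b : ℝ) : 0 ≤ betaFn a b := by
  refine intervalIntegral.integral_nonneg zero_le_one fun t ht => ?_
  have : 0 ≤ 1 - t := sub_nonneg.2 ht.2
  exact mul_nonneg (rpow_nonneg ht.1 _) (rpow_nonneg this _)

theorem mcN_zero_is_mode_general (a b c : ℝ) (hc : 0 < c)
    (h1 : c * (1 - b) = ((2:ℝ) ^ c - 1) * (1 - a*c))
    (h2 : a > Real.pi / (2 * c^2) * ((2:ℝ) ^ (-c) - 1) + 1/c) :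
    sFun a b c 0 = 0 ∧ deriv (sFun a b c) 0 < 0
      ∧ IsLocalMax (fun z => (c / betaFn a b) * gaussPdf z * stdNormCdf z ^ (a*c - 1)
          * (1 - stdNormCdf z ^ c) ^ (b - 1)) 0 := by
  have hinv : (2:ℝ) ^ c * 2 ^ (-c) = 1 := by
    rw [← rpow_add two_pos, add_neg_cancel, rpow_zero]
  have h1' : c * (b - 1) * 2 ^ (-c) = (a*c - 1) * (1 - 2 ^ (-c)) := by
    linear_combination (-(2:ℝ) ^ (-c)) * h1 + (a*c - 1) * hinv
  have hs₀ : sFun a b c 0 = 0 := by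
    rw [sFun_zero, h1', sub_self, zero_mul]
  have hs' : deriv (sFun a b c) 0 < 0 := by
    have hnum : c * (a*c - 1 + c * (b - 1)) * 2 ^ (-c) = c * (a*c - 1) := by
      linear_combination c * h1'
    have h2' : ((2:ℝ) ^ (-c) - 1) / 2 < c * (a*c - 1) / π := by
      have := mul_lt_mul_of_pos_right h2 (pow_pos hc 2)
      field_simp at this
      rw [lt_div_iff₀ pi_pos]
      linarith
    rw [(hasDerivAt_sFun_zero a b c).deriv, hnum]
    linarith
  refine ⟨hs₀, hs', ?_⟩
  have hK : 0 ≤ c / betaFn a b := div_nonneg hc.le (betaFn_nonneg a b)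
  convert (isLocalMax_mcNKernel hc hs₀ hs').comp_mono (monotone_mul_left_of_nonneg hK) using 1
  ext z
  simp only [mcNKernel, Function.comp_apply]
  ring

/-- sufficient conditions for z = 0 to be a mode of the McN density. -/
theorem mcN_zero_is_mode (a b c : ℝ) (ha : 0 < a) (hb : 0 < b) (hc : 0 < c)
    (h1 : c * (1 - b) = ((2:ℝ) ^ c - 1) * (1 - a*c))
    (h2 : a > Real.pi / (2 * c^2) * ((2:ℝ) ^ (-c) - 1) + 1/c) :
    sFun a b c 0 = 0 ∧ deriv (sFun a b c) 0 < 0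
      ∧ IsLocalMax (fun z => (c / betaFn a b) * gaussPdf z * stdNormCdf z ^ (a*c - 1)
          * (1 - stdNormCdf z ^ c) ^ (b - 1)) 0 :=
  mcN_zero_is_mode_general a b c hc h1 h2
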